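/- arXiv:1305.7086 — 3 statements merged into one kernel-verified Lean document; each statement's English description precedes it below -/
import Mathlib

section
/- Let u : ℝ² → ℝ² be a smooth (C^∞) function with compact support and div u = 0 on all of ℝ². Then ∑_{j=1}^{2} ∫_{ℝ²} ∂_j((u·∇)u)(θ) · ∂_j u(θ) dθ = 0. -/
open MeasureTheory
open scoped RealInnerProductSpace

noncomputable section

/-- ℝ² as a Euclidean space. -/
abbrev E2 : Type := EuclideanSpace ℝ (Fin 2)

/-- The `i`-th partial derivative of `u : ℝ² → ℝ²` at `θ`. -/
def pd (u : E2 → E2) (i : Fin 2) (θ : E2) : E2 :=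
  fderiv ℝ u θ (EuclideanSpace.single i 1)

/-- The transport term `(u·∇)v` : `θ ↦ ∑ i, uⁱ(θ) ∂ᵢ v(θ)`. -/
def transport (u v : E2 → E2) (θ : E2) : E2 :=
  ∑ i, u θ i • pd v i θ

/-- The divergence `∂₁u¹ + ∂₂u²` of `u : ℝ² → ℝ²` at `θ`. -/
def div2 (u : E2 → E2) (θ : E2) : ℝ :=
  ∑ i, pd u i θ i

namespace GradTransportAux

/-- standard basis vector -/
def ee (i : Fin 2) : E2 := EuclideanSpace.single i 1

variable {u : E2 → E2}

lemma hcs_aux {γ δ : Type*} [Zero γ] [Zero δ] {f : E2 → γ} {g : E2 → δ}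
    (hg : HasCompactSupport g) (h : ∀ x, g x = 0 → f x = 0) : HasCompactSupport f :=
  hg.mono (fun x hx h0 => hx (h x h0))

lemma contDiff_pd (hu : ContDiff ℝ (⊤ : ℕ∞) u) (i : Fin 2) : ContDiff ℝ (⊤ : ℕ∞) (pd u i) :=
  (hu.fderiv_right (by simp)).clm_apply contDiff_const

lemma contDiff_coord (hu : ContDiff ℝ (⊤ : ℕ∞) u) (i : Fin 2) : ContDiff ℝ (⊤ : ℕ∞) (fun θ => u θ i) :=
  (EuclideanSpace.proj (𝕜 := ℝ) i).contDiff.comp hu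

lemma fderiv_coord (hu : ContDiff ℝ (⊤ : ℕ∞) u) (i : Fin 2) (θ v : E2) :
    fderiv ℝ (fun θ => u θ i) θ v = fderiv ℝ u θ v i := by
  have h : fderiv ℝ (fun θ => u θ i) θ = (EuclideanSpace.proj (𝕜 := ℝ) i).comp (fderiv ℝ u θ) := by
    rw [show (fun θ => u θ i) = (EuclideanSpace.proj (𝕜 := ℝ) i) ∘ u from rfl]
    rw [fderiv_comp θ (EuclideanSpace.proj (𝕜 := ℝ) i).differentiableAt
      (hu.differentiable (by simp) θ)]
    rw [ContinuousLinearMap.fderiv]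
  rw [h]; rfl

lemma pd_pd_comm (hu : ContDiff ℝ (⊤ : ℕ∞) u) (i j : Fin 2) (θ : E2) :
    pd (pd u i) j θ = pd (pd u j) i θ := by
  have hdf : DifferentiableAt ℝ (fderiv ℝ u) θ :=
    ((hu.fderiv_right (m := (⊤ : ℕ∞)) (by simp)).differentiable (by simp)) θ
  have hsym : IsSymmSndFDerivAt ℝ u θ :=
    (hu.contDiffAt).isSymmSndFDerivAt (by rw [minSmoothness_of_isRCLikeNormedField]; show ((2 : ℕ∞) : WithTop ℕ∞) ≤ ((⊤ : ℕ∞) : WithTop ℕ∞); exact WithTop.coe_le_coe.mpr le_top)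
  have key : ∀ a b : Fin 2, pd (pd u a) b θ = fderiv ℝ (fderiv ℝ u) θ (ee b) (ee a) := by
    intro a b
    show fderiv ℝ (fun x => fderiv ℝ u x (ee a)) θ (ee b) = _
    rw [fderiv_clm_apply hdf (differentiableAt_const _)]
    simp
  rw [key, key, hsym.eq]

lemma pd_transport (hu : ContDiff ℝ (⊤ : ℕ∞) u) (j : Fin 2) (θ : E2) :
    pd (transport u u) j θ =
      (∑ i, pd u j θ i • pd u i θ) + ∑ i, u θ i • pd (pd u i) j θ := by
  have hc : ∀ i : Fin 2, DifferentiableAt ℝ (fun θ => u θ i) θ := fun i =>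
    (contDiff_coord hu i).differentiable (by simp) θ
  have hp : ∀ i : Fin 2, DifferentiableAt ℝ (pd u i) θ := fun i =>
    ((contDiff_pd hu i).differentiable (by simp)) θ
  have H : HasFDerivAt (transport u u)
      (∑ i, ((u θ i) • fderiv ℝ (pd u i) θ
        + (fderiv ℝ (fun θ => u θ i) θ).smulRight (pd u i θ))) θ := by
    apply HasFDerivAt.fun_sum
    intro i _
    exact ((hc i).hasFDerivAt.smul (hp i).hasFDerivAt)
  rw [pd, H.fderiv]
  simp only [ContinuousLinearMap.sum_apply, ContinuousLinearMap.add_apply,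
    ContinuousLinearMap.smul_apply, ContinuousLinearMap.smulRight_apply, fderiv_coord hu,
    Finset.sum_add_distrib]
  rw [add_comm]
  rfl

lemma alg_zero (_hu : ContDiff ℝ (⊤ : ℕ∞) u) (hdiv : ∀ θ, div2 u θ = 0) (θ : E2) :
    ∑ j : Fin 2, ∑ i : Fin 2, pd u j θ i * ⟪pd u i θ, pd u j θ⟫ = 0 := by
  have h := hdiv θ
  simp only [div2, Fin.sum_univ_two] at h
  simp only [PiLp.inner_apply, RCLike.inner_apply, conj_trivial, Fin.sum_univ_two]
  linear_combination (pd u 0 θ 0 ^ 2 + pd u 1 θ 0 ^ 2 + pd u 0 θ 1 ^ 2 + pd u 1 θ 1 ^ 2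
    - (pd u 0 θ 0 * pd u 1 θ 1 - pd u 1 θ 0 * pd u 0 θ 1)) * h

lemma pointwise (hu : ContDiff ℝ (⊤ : ℕ∞) u) (hdiv : ∀ θ, div2 u θ = 0) (θ : E2) :
    ∑ j, ⟪pd (transport u u) j θ, pd u j θ⟫
      = (1/2) * ∑ i, u θ i *
          fderiv ℝ (fun x => ∑ j, ⟪pd u j x, pd u j x⟫) θ (ee i) := by
  have hp : ∀ (i : Fin 2) (x : E2), DifferentiableAt ℝ (pd u i) x := fun i x =>
    ((contDiff_pd hu i).differentiable (by simp)) x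
  have hG : ∀ i : Fin 2, fderiv ℝ (fun x => ∑ j, ⟪pd u j x, pd u j x⟫) θ (ee i)
      = 2 * ∑ j, ⟪pd (pd u j) i θ, pd u j θ⟫ := by
    intro i
    rw [fderiv_fun_sum (fun j _ => ((hp j θ).inner ℝ (hp j θ)))]
    rw [ContinuousLinearMap.sum_apply, Finset.mul_sum]
    refine Finset.sum_congr rfl fun j _ => ?_
    rw [fderiv_inner_apply ℝ (hp j θ) (hp j θ)]
    have : fderiv ℝ (pd u j) θ (ee i) = pd (pd u j) i θ := rfl
    rw [this, real_inner_comm (pd u j θ)]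
    ring
  calc ∑ j, ⟪pd (transport u u) j θ, pd u j θ⟫
      = ∑ j : Fin 2, (∑ i : Fin 2, pd u j θ i * ⟪pd u i θ, pd u j θ⟫
          + ∑ i : Fin 2, u θ i * ⟪pd (pd u i) j θ, pd u j θ⟫) := by
        refine Finset.sum_congr rfl fun j _ => ?_
        rw [pd_transport hu j θ, inner_add_left, sum_inner, sum_inner]
        simp only [real_inner_smul_left]
    _ = ∑ j : Fin 2, ∑ i : Fin 2, u θ i * ⟪pd (pd u i) j θ, pd u j θ⟫ := by
        rw [Finset.sum_add_distrib, alg_zero hu hdiv θ, zero_add]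
    _ = ∑ i : Fin 2, u θ i * ∑ j : Fin 2, ⟪pd (pd u j) i θ, pd u j θ⟫ := by
        rw [Finset.sum_comm]
        refine Finset.sum_congr rfl fun i _ => ?_
        rw [Finset.mul_sum]
        refine Finset.sum_congr rfl fun j _ => ?_
        rw [pd_pd_comm hu i j θ]
    _ = (1/2) * ∑ i, u θ i *
          fderiv ℝ (fun x => ∑ j, ⟪pd u j x, pd u j x⟫) θ (ee i) := by
        rw [Finset.mul_sum]
        refine Finset.sum_congr rfl fun i _ => ?_
        rw [hG i]; ring

end GradTransportAux

open GradTransportAux in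
theorem grad_transport_inner_grad_eq_zero
    (u : E2 → E2)
    (hu : ContDiff ℝ (⊤ : ℕ∞) u) (hu' : HasCompactSupport u)
    (hdiv : ∀ θ, div2 u θ = 0) :
    ∑ j, ∫ θ : E2, ⟪pd (transport u u) j θ, pd u j θ⟫ = 0 := by
  classical
  -- continuity and support facts
  have hpcont : ∀ i : Fin 2, Continuous (pd u i) := fun i => (contDiff_pd hu i).continuous
  have hpsupp : ∀ i : Fin 2, HasCompactSupport (pd u i) := fun i =>
    hu'.fderiv_apply ℝ (EuclideanSpace.single i 1)
  have hcoordsupp : ∀ i : Fin 2, HasCompactSupport (fun θ => u θ i) := fun i =>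
    hu'.comp_left (g := fun v : E2 => v i) rfl
  have hTc : ContDiff ℝ (⊤ : ℕ∞) (transport u u) := by
    apply ContDiff.sum
    intro i _
    exact (contDiff_coord hu i).smul (contDiff_pd hu i)
  -- the function G = |∇u|²
  set G : E2 → ℝ := fun x => ∑ j, ⟪pd u j x, pd u j x⟫ with hGdef
  have hGc : ContDiff ℝ (⊤ : ℕ∞) G := by
    apply ContDiff.sum
    intro j _
    exact (contDiff_pd hu j).inner ℝ (contDiff_pd hu j)
  have hGsupp : HasCompactSupport G := by
    have h0 : HasCompactSupport (fun x : E2 => (⟪pd u 0 x, pd u 0 x⟫ : ℝ)) :=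
      hcs_aux (hpsupp 0) (fun x hx => by rw [hx, inner_zero_right])
    have h1 : HasCompactSupport (fun x : E2 => (⟪pd u 1 x, pd u 1 x⟫ : ℝ)) :=
      hcs_aux (hpsupp 1) (fun x hx => by rw [hx, inner_zero_right])
    have hGeq : G = (fun x : E2 => (⟪pd u 0 x, pd u 0 x⟫ : ℝ))
        + (fun x : E2 => (⟪pd u 1 x, pd u 1 x⟫ : ℝ)) := by
      funext x
      simp [hGdef, Fin.sum_univ_two]
    rw [hGeq]
    exact h0.add h1
  -- integrability of the original integrands
  have hint : ∀ j : Fin 2, Integrable (fun θ => ⟪pd (transport u u) j θ, pd u j θ⟫) := by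
    intro j
    apply Continuous.integrable_of_hasCompactSupport
    · exact ((contDiff_pd hTc j).continuous).inner (hpcont j)
    · exact hcs_aux (hpsupp j) (fun x hx => by rw [hx, inner_zero_right])
  rw [← integral_finset_sum _ (fun j _ => hint j)]
  have hpt : ∀ θ : E2, ∑ j, ⟪pd (transport u u) j θ, pd u j θ⟫
      = (1/2) * ∑ i, u θ i * fderiv ℝ G θ (ee i) := fun θ => pointwise hu hdiv θ
  rw [integral_congr_ae (Filter.Eventually.of_forall hpt)]
  -- differentiability / continuity facts
  have hfc : ∀ i : Fin 2, Continuous (fun θ => u θ i) := fun i => (contDiff_coord hu i).continuous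
  have hGdiff : Differentiable ℝ G := hGc.differentiable (by simp)
  have hfdiff : ∀ i : Fin 2, Differentiable ℝ (fun θ => u θ i) := fun i =>
    (contDiff_coord hu i).differentiable (by simp)
  have hfderivGc : Continuous (fun θ => fderiv ℝ G θ) := (hGc.fderiv_right (m := (⊤ : ℕ∞)) (by simp)).continuous
  have hGcont : Continuous G := hGc.continuous
  have int1 : ∀ i : Fin 2, Integrable (fun θ => u θ i * fderiv ℝ G θ (ee i)) := by
    intro i
    apply Continuous.integrable_of_hasCompactSupport
    · exact (hfc i).mul (hfderivGc.clm_apply continuous_const)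
    · exact hcs_aux (hcoordsupp i) (fun x hx => by rw [hx, zero_mul])
  have int2 : ∀ i : Fin 2, Integrable (fun θ => fderiv ℝ (fun θ => u θ i) θ (ee i) * G θ) := by
    intro i
    apply Continuous.integrable_of_hasCompactSupport
    · exact ((((contDiff_coord hu i).fderiv_right (m := (⊤ : ℕ∞)) (by simp)).continuous).clm_apply
        continuous_const).mul hGcont
    · exact hcs_aux hGsupp (fun x hx => by rw [hx, mul_zero])
  have int3 : ∀ i : Fin 2, Integrable (fun θ => u θ i * G θ) := by
    intro i
    apply Continuous.integrable_of_hasCompactSupport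
    · exact (hfc i).mul hGcont
    · exact hcs_aux (hcoordsupp i) (fun x hx => by rw [hx, zero_mul])
  -- integration by parts in each direction
  have ibp : ∀ i : Fin 2, ∫ θ : E2, u θ i * fderiv ℝ G θ (ee i)
      = - ∫ θ : E2, fderiv ℝ (fun θ => u θ i) θ (ee i) * G θ := by
    intro i
    exact integral_mul_fderiv_eq_neg_fderiv_mul_of_integrable (int2 i) (int1 i) (int3 i)
      (fun x _ => hfdiff i x) (fun x _ => hGdiff x)
  rw [integral_const_mul]
  rw [integral_finset_sum _ (fun i _ => int1 i)]
  have hstep : ∀ i : Fin 2, (∫ θ : E2, u θ i * fderiv ℝ G θ (ee i))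
      = - ∫ θ : E2, pd u i θ i * G θ := by
    intro i
    rw [ibp i]
    congr 1
    refine integral_congr_ae (Filter.Eventually.of_forall fun θ => ?_)
    simp only [fderiv_coord hu i]
    rfl
  have int4 : ∀ i : Fin 2, Integrable (fun θ => pd u i θ i * G θ) := by
    intro i
    apply Continuous.integrable_of_hasCompactSupport
    · exact (((EuclideanSpace.proj (𝕜 := ℝ) i).continuous).comp (hpcont i)).mul hGcont
    · exact hcs_aux hGsupp (fun x hx => by rw [hx, mul_zero])
  simp only [hstep]
  rw [Finset.sum_neg_distrib, ← integral_finset_sum _ (fun i _ => int4 i)]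
  have hzero : ∀ θ : E2, ∑ i : Fin 2, pd u i θ i * G θ = 0 := by
    intro θ
    rw [← Finset.sum_mul]
    have hd : ∑ i : Fin 2, pd u i θ i = div2 u θ := rfl
    rw [hd, hdiv θ, zero_mul]
  rw [integral_congr_ae (Filter.Eventually.of_forall hzero)]
  simp
end
end

section
/- Let u : ℝ² → ℝ² be differentiable at a point θ ∈ ℝ², and suppose ∂₁u¹(θ) + ∂₂u²(θ) = 0. Then ∑_{i,j,m=1}^{2} (∂_j u^i)(θ) (∂_i u^m)(θ) (∂_j u^m)(θ) = 0. -/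
noncomputable section

/-- The partial derivative `∂ⱼ uⁱ (θ)` of `u : ℝ² → ℝ²`. -/
def pdc (u : E2 → E2) (j i : Fin 2) (θ : E2) : ℝ :=
  fderiv ℝ u θ (EuclideanSpace.single j 1) i

theorem jacobian_cubic_identity_of_div_free
    (u : E2 → E2) (θ : E2) (hu : DifferentiableAt ℝ u θ)
    (hdiv : pdc u 0 0 θ + pdc u 1 1 θ = 0) :
    ∑ i, ∑ j, ∑ m, pdc u j i θ * pdc u i m θ * pdc u j m θ = 0 := by
  set a := pdc u 0 0 θ
  set b := pdc u 0 1 θ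
  set c := pdc u 1 0 θ
  set d := pdc u 1 1 θ
  simp only [Fin.sum_univ_two]
  linear_combination (a^2 - a*d + d^2 + b^2 + c^2 + b*c) * hdiv
end
end

section
/- Let u : ℝ² → ℝ² be a smooth (C^∞) function that is 2π-periodic in each coordinate (u(θ + 2π e_j) = u(θ) for j = 1, 2 and all θ ∈ ℝ²), with div u = 0 on all of ℝ². Then ∑_{j=1}^{2} ∫_{[0,2π]²} ∂_j((u·∇)u)(θ) · ∂_j u(θ) dθ = 0. -/
open MeasureTheory Real
open scoped RealInnerProductSpace

noncomputable section

/-- `u : ℝ² → ℝ²` is 2π-periodic in each coordinate. -/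
def Periodic2 (u : E2 → E2) : Prop :=
  ∀ (θ : E2) (j : Fin 2), u (θ + (2 * π) • EuclideanSpace.single j 1) = u θ

/-- The fundamental square `[0, 2π]²` in ℝ². -/
def Torus2 : Set E2 :=
  {θ : E2 | ∀ i, θ i ∈ Set.Icc 0 (2 * π)}

/-! ### Auxiliary lemmas -/

lemma torus2_eq_preimage :
    Torus2 = ⇑(MeasurableEquiv.toLp 2 (Fin 2 → ℝ)).symm ⁻¹' (Set.Icc 0 (fun _ => 2*π)) := by
  ext θ
  simp [Torus2, Set.mem_Icc, Pi.le_def, forall_and]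

lemma torus2_eq_preimage' :
    Torus2 = ⇑(EuclideanSpace.equiv (Fin 2) ℝ) ⁻¹' (Set.Icc 0 (fun _ => 2*π)) := by
  ext θ
  simp [Torus2, Set.mem_Icc, Pi.le_def, forall_and, EuclideanSpace.equiv]

lemma isCompact_torus2 : IsCompact Torus2 := by
  rw [torus2_eq_preimage']
  exact (EuclideanSpace.equiv (Fin 2) ℝ).toHomeomorph.isCompact_preimage.mpr isCompact_Icc

/-- **Key integral lemma**: the integral of the divergence of a smooth periodic vector field
over the fundamental square vanishes. -/
lemma integral_div2_torus_eq_zero (F : E2 → E2) (hF : ContDiff ℝ (⊤ : ℕ∞) F) (hF' : Periodic2 F) :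
    ∫ θ in Torus2, div2 F θ = 0 := by
  set ψ : (Fin 2 → ℝ) ≃L[ℝ] E2 := (EuclideanSpace.equiv (Fin 2) ℝ).symm with hψ
  set c : Fin 2 → ℝ := fun _ => 2*π with hc
  have step1 : ∫ θ in Torus2, div2 F θ = ∫ x in Set.Icc 0 c, div2 F (ψ x) := by
    have key := (EuclideanSpace.volume_preserving_symm_measurableEquiv_toLp (Fin 2)).setIntegral_preimage_emb
      (MeasurableEquiv.toLp 2 (Fin 2 → ℝ)).symm.measurableEmbedding
      (fun y => div2 F (ψ y)) (Set.Icc 0 c)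
    rw [torus2_eq_preimage, ← key]
    apply setIntegral_congr_fun ((MeasurableEquiv.toLp 2 (Fin 2 → ℝ)).symm.measurable
      measurableSet_Icc)
    intro θ _
    rfl
  rw [step1]
  have hFd : Differentiable ℝ F := hF.differentiable (by simp)
  have hle : (0 : Fin 2 → ℝ) ≤ c := fun i => by positivity
  set f : (Fin 2 → ℝ) → (Fin 2 → ℝ) := fun x i => F (ψ x) i with hf
  set f' : (Fin 2 → ℝ) → (Fin 2 → ℝ) →L[ℝ] (Fin 2 → ℝ) := fun x =>
    ((EuclideanSpace.equiv (Fin 2) ℝ : E2 →L[ℝ] (Fin 2 → ℝ)).comp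
      ((fderiv ℝ F (ψ x)).comp (ψ : (Fin 2 → ℝ) →L[ℝ] E2))) with hf'
  have hder : ∀ x : Fin 2 → ℝ, HasFDerivAt f (f' x) x := by
    intro x
    have h1 : HasFDerivAt (fun y : Fin 2 → ℝ => F (ψ y)) ((fderiv ℝ F (ψ x)).comp
        (ψ : (Fin 2 → ℝ) →L[ℝ] E2)) x :=
      (hFd (ψ x)).hasFDerivAt.comp x ψ.hasFDerivAt
    exact ((EuclideanSpace.equiv (Fin 2) ℝ).hasFDerivAt).comp x h1
  have hcont : Continuous f :=
    continuous_pi fun i => (EuclideanSpace.proj i).continuous.comp (hF.continuous.comp ψ.continuous)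
  have hdivcont : Continuous fun x => div2 F (ψ x) := by
    have : ∀ i : Fin 2, Continuous fun x : Fin 2 → ℝ => pd F i (ψ x) i := by
      intro i
      have h1 : Continuous (fderiv ℝ F) := (hF.fderiv_right (m := (⊤ : ℕ∞)) (by simp)).continuous
      exact (EuclideanSpace.proj i).continuous.comp
        ((h1.comp ψ.continuous).clm_apply continuous_const)
    exact continuous_finset_sum _ fun i _ => this i
  have hint : IntegrableOn (fun x => ∑ i, f' x (Pi.single i 1) i) (Set.Icc 0 c) := by
    have : (fun x => ∑ i, f' x (Pi.single i 1) i) = fun x => div2 F (ψ x) := rfl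
    rw [this]
    exact hdivcont.continuousOn.integrableOn_compact isCompact_Icc
  have hdivthm := MeasureTheory.integral_divergence_of_hasFDerivAt_off_countable
    0 c hle f f' ∅ Set.countable_empty hcont.continuousOn (fun x _ => hder x) hint
  have hψcoord : ∀ (y : Fin 2 → ℝ) (j : Fin 2), (ψ y) j = y j := fun _ _ => rfl
  have hface : ∀ (i : Fin 2) (x : Fin 1 → ℝ),
      (ψ (i.insertNth (c i) x) : E2)
        = ψ (i.insertNth ((0 : Fin 2 → ℝ) i) x) + (2*π) • EuclideanSpace.single i 1 := by
    intro i x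
    ext j
    refine Fin.succAboveCases i ?_ ?_ j
    · simp [PiLp.add_apply, PiLp.smul_apply, smul_eq_mul, hψcoord,
        EuclideanSpace.single_apply, Fin.insertNth_apply_same, hc]
    · intro k
      simp [PiLp.add_apply, PiLp.smul_apply, smul_eq_mul, hψcoord,
        EuclideanSpace.single_apply, Fin.insertNth_apply_succAbove,
        (Fin.succAbove_ne i k)]
  calc ∫ x in Set.Icc 0 c, div2 F (ψ x)
      = ∫ x in Set.Icc 0 c, ∑ i, f' x (Pi.single i 1) i := rfl
    _ = ∑ i : Fin 2, ((∫ x in Set.Icc ((0 : Fin 2 → ℝ) ∘ i.succAbove) (c ∘ i.succAbove),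
          f (i.insertNth (c i) x) i)
        - ∫ x in Set.Icc ((0 : Fin 2 → ℝ) ∘ i.succAbove) (c ∘ i.succAbove),
          f (i.insertNth ((0 : Fin 2 → ℝ) i) x) i) := hdivthm
    _ = 0 := by
        refine Finset.sum_eq_zero fun i _ => ?_
        have : (fun x : Fin 1 → ℝ => f (i.insertNth (c i) x) i)
            = fun x : Fin 1 → ℝ => f (i.insertNth ((0 : Fin 2 → ℝ) i) x) i := by
          funext x
          show F (ψ (i.insertNth (c i) x)) i = F (ψ (i.insertNth ((0 : Fin 2 → ℝ) i) x)) i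
          rw [hface i x, hF' _ i]
        rw [this, sub_self]

section CalcLemmas

variable {u : E2 → E2}

lemma contDiff_pd (hu : ContDiff ℝ (⊤ : ℕ∞) u) (i : Fin 2) : ContDiff ℝ (⊤ : ℕ∞) (pd u i) :=
  (hu.fderiv_right (m := (⊤ : ℕ∞)) (by simp)).clm_apply contDiff_const

lemma contDiff_coord (hu : ContDiff ℝ (⊤ : ℕ∞) u) (i : Fin 2) : ContDiff ℝ (⊤ : ℕ∞) (fun θ => u θ i) := by
  exact (EuclideanSpace.proj (𝕜 := ℝ) i : E2 →L[ℝ] ℝ).contDiff.comp hu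

lemma contDiff_transport (hu : ContDiff ℝ (⊤ : ℕ∞) u) : ContDiff ℝ (⊤ : ℕ∞) (transport u u) := by
  unfold transport
  exact ContDiff.sum fun i _ => (contDiff_coord hu i).smul (contDiff_pd hu i)

lemma fderiv_coord (hu : ContDiff ℝ (⊤ : ℕ∞) u) (i : Fin 2) (θ v : E2) :
    fderiv ℝ (fun θ => u θ i) θ v = fderiv ℝ u θ v i := by
  have h := ((EuclideanSpace.proj (𝕜 := ℝ) i).hasFDerivAt.comp θ
    (hu.differentiable (by simp) θ).hasFDerivAt).fderiv
  have heq : (fun θ => u θ i) = (EuclideanSpace.proj (𝕜 := ℝ) i) ∘ u := rfl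
  rw [heq, h]
  rfl

lemma pd_transport (hu : ContDiff ℝ (⊤ : ℕ∞) u) (j : Fin 2) (θ : E2) :
    pd (transport u u) j θ =
      ∑ i, (pd u j θ i) • pd u i θ + ∑ i, u θ i • pd (pd u i) j θ := by
  have hdc : ∀ i : Fin 2, DifferentiableAt ℝ (fun θ => u θ i) θ :=
    fun i => ((contDiff_coord hu i).differentiable (by simp)) θ
  have hdp : ∀ i : Fin 2, DifferentiableAt ℝ (pd u i) θ :=
    fun i => ((contDiff_pd hu i).differentiable (by simp)) θ
  have h1 : pd (transport u u) j θ
      = (fderiv ℝ (fun θ => ∑ i, u θ i • pd u i θ) θ) (EuclideanSpace.single j 1) := rfl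
  rw [h1, fderiv_fun_sum (A := fun i θ => u θ i • pd u i θ) (fun i _ => (hdc i).smul (hdp i))]
  rw [ContinuousLinearMap.sum_apply]
  have h2 : ∀ i : Fin 2, (fderiv ℝ (fun θ => u θ i • pd u i θ) θ) (EuclideanSpace.single j 1)
      = (pd u j θ i) • pd u i θ + u θ i • pd (pd u i) j θ := by
    intro i
    rw [fderiv_fun_smul (hdc i) (hdp i)]
    simp only [ContinuousLinearMap.add_apply, ContinuousLinearMap.smul_apply,
      ContinuousLinearMap.smulRight_apply]
    rw [fderiv_coord hu i]
    unfold pd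
    rw [add_comm]
  rw [Finset.sum_congr rfl fun i _ => h2 i, Finset.sum_add_distrib]

lemma pd_comm (hu : ContDiff ℝ (⊤ : ℕ∞) u) (i j : Fin 2) (θ : E2) :
    pd (pd u i) j θ = pd (pd u j) i θ := by
  have hd : ∀ y, HasFDerivAt u (fderiv ℝ u y) y :=
    fun y => (hu.differentiable (by simp) y).hasFDerivAt
  have h2 : HasFDerivAt (fderiv ℝ u) (fderiv ℝ (fderiv ℝ u) θ) θ :=
    (((hu.fderiv_right (m := (⊤ : ℕ∞)) (by simp)).differentiable (by simp)) θ).hasFDerivAt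
  have key : ∀ v w : E2, fderiv ℝ (fun y => fderiv ℝ u y v) θ w
      = fderiv ℝ (fderiv ℝ u) θ w v := by
    intro v w
    have hc := ((ContinuousLinearMap.apply ℝ E2 v).hasFDerivAt.comp θ h2).fderiv
    have he : (fun y => fderiv ℝ u y v) = (ContinuousLinearMap.apply ℝ E2 v) ∘ (fderiv ℝ u) := rfl
    rw [he, hc]
    rfl
  show fderiv ℝ (fun y => fderiv ℝ u y (EuclideanSpace.single i 1)) θ (EuclideanSpace.single j 1) = _
  rw [key, second_derivative_symmetric hd h2, ← key]
  rfl

lemma periodic2_pd (hu : ContDiff ℝ (⊤ : ℕ∞) u) (hu' : Periodic2 u) (i : Fin 2) :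
    Periodic2 (pd u i) := by
  intro θ j
  set v : E2 := (2 * π) • EuclideanSpace.single j 1 with hv
  have h1 : HasFDerivAt (fun x : E2 => u (x + v)) (fderiv ℝ u (θ + v)) θ := by
    have := (hu.differentiable (by simp) (θ + v)).hasFDerivAt.comp θ
      ((hasFDerivAt_id θ).add_const v)
    exact this
  have h2 : (fun x : E2 => u (x + v)) = u := funext fun x => hu' x j
  rw [h2] at h1
  show fderiv ℝ u (θ + v) (EuclideanSpace.single i 1) = fderiv ℝ u θ (EuclideanSpace.single i 1)
  rw [h1.fderiv]

lemma alg2 (A : Fin 2 → E2) (h : A 0 0 + A 1 1 = 0) :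
    ∑ j : Fin 2, ∑ i : Fin 2, A j i * ⟪A i, A j⟫ = 0 := by
  simp only [PiLp.inner_apply, RCLike.inner_apply, conj_trivial, Fin.sum_univ_two]
  linear_combination ((A 0 0)^2 + (A 0 1)^2 + (A 1 0)^2 + (A 1 1)^2
    - A 0 0 * A 1 1 + A 0 1 * A 1 0) * h

lemma contDiff_g (hu : ContDiff ℝ (⊤ : ℕ∞) u) :
    ContDiff ℝ (⊤ : ℕ∞) (fun θ => (1/2 : ℝ) * ∑ j, ⟪pd u j θ, pd u j θ⟫) :=
  contDiff_const.mul (ContDiff.sum fun j _ => (contDiff_pd hu j).inner ℝ (contDiff_pd hu j))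

lemma fderiv_g (hu : ContDiff ℝ (⊤ : ℕ∞) u) (i : Fin 2) (θ : E2) :
    fderiv ℝ (fun θ => (1/2 : ℝ) * ∑ j, ⟪pd u j θ, pd u j θ⟫) θ (EuclideanSpace.single i 1)
      = ∑ j, ⟪pd (pd u j) i θ, pd u j θ⟫ := by
  have hdp : ∀ j : Fin 2, DifferentiableAt ℝ (pd u j) θ :=
    fun j => ((contDiff_pd hu j).differentiable (by simp)) θ
  rw [fderiv_const_mul (by
    exact (DifferentiableAt.fun_sum fun j _ => ((hdp j).inner ℝ (hdp j))))]
  rw [ContinuousLinearMap.smul_apply, fderiv_fun_sum (fun j _ => ((hdp j).inner ℝ (hdp j))),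
    ContinuousLinearMap.sum_apply]
  rw [Finset.sum_congr rfl fun j _ => fderiv_inner_apply (𝕜 := ℝ) (hdp j) (hdp j) _]
  have key : ∀ j : Fin 2, (⟪pd u j θ, fderiv ℝ (pd u j) θ (EuclideanSpace.single i 1)⟫
      + ⟪fderiv ℝ (pd u j) θ (EuclideanSpace.single i 1), pd u j θ⟫)
      = 2 * ⟪pd (pd u j) i θ, pd u j θ⟫ := by
    intro j
    rw [real_inner_comm]
    show ⟪pd (pd u j) i θ, pd u j θ⟫ + ⟪pd (pd u j) i θ, pd u j θ⟫
        = 2 * ⟪pd (pd u j) i θ, pd u j θ⟫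
    ring
  rw [smul_eq_mul, Finset.mul_sum]
  refine Finset.sum_congr rfl fun j _ => ?_
  rw [key j]
  ring

lemma pointwise_id (hu : ContDiff ℝ (⊤ : ℕ∞) u) (hdiv : ∀ θ, div2 u θ = 0) (θ : E2) :
    ∑ j, ⟪pd (transport u u) j θ, pd u j θ⟫
      = div2 (fun θ => ((1/2 : ℝ) * ∑ j, ⟪pd u j θ, pd u j θ⟫) • u θ) θ := by
  set g : E2 → ℝ := fun θ => (1/2 : ℝ) * ∑ j, ⟪pd u j θ, pd u j θ⟫ with hg
  have hgd : DifferentiableAt ℝ g θ := ((contDiff_g hu).differentiable (by simp)) θ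
  have hud : DifferentiableAt ℝ u θ := (hu.differentiable (by simp)) θ
  have hpdG : ∀ i : Fin 2, pd (fun θ => g θ • u θ) i θ
      = g θ • pd u i θ + (fderiv ℝ g θ (EuclideanSpace.single i 1)) • u θ := by
    intro i
    show (fderiv ℝ (fun θ => g θ • u θ) θ) (EuclideanSpace.single i 1) = _
    rw [fderiv_fun_smul hgd hud]
    simp only [ContinuousLinearMap.add_apply, ContinuousLinearMap.smul_apply,
      ContinuousLinearMap.smulRight_apply]
    rfl
  have hRHS : div2 (fun θ => g θ • u θ) θ
      = ∑ i, u θ i * ∑ j, ⟪pd (pd u j) i θ, pd u j θ⟫ := by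
    unfold div2
    rw [Finset.sum_congr rfl fun i _ => by rw [hpdG i]]
    have hco : ∀ i : Fin 2, (g θ • pd u i θ + (fderiv ℝ g θ (EuclideanSpace.single i 1)) • u θ) i
        = g θ * pd u i θ i + (fderiv ℝ g θ (EuclideanSpace.single i 1)) * u θ i := fun i => rfl
    rw [Finset.sum_congr rfl fun i _ => hco i, Finset.sum_add_distrib, ← Finset.mul_sum]
    have hdv := hdiv θ
    unfold div2 at hdv
    rw [hdv, mul_zero, zero_add]
    exact Finset.sum_congr rfl fun i _ => by rw [fderiv_g hu i θ]; ring
  rw [hRHS]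
  have hL : ∀ j : Fin 2, ⟪pd (transport u u) j θ, pd u j θ⟫
      = (∑ i, pd u j θ i * ⟪pd u i θ, pd u j θ⟫)
        + ∑ i, u θ i * ⟪pd (pd u i) j θ, pd u j θ⟫ := by
    intro j
    rw [pd_transport hu j θ, inner_add_left, sum_inner, sum_inner]
    simp only [real_inner_smul_left]
  rw [Finset.sum_congr rfl fun j _ => hL j, Finset.sum_add_distrib]
  have h0 : ∑ j : Fin 2, ∑ i : Fin 2, pd u j θ i * ⟪pd u i θ, pd u j θ⟫ = 0 := by
    have hdv := hdiv θ
    unfold div2 at hdv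
    exact alg2 (fun j => pd u j θ) (by simpa [Fin.sum_univ_two] using hdv)
  rw [h0, zero_add, Finset.sum_comm]
  refine Finset.sum_congr rfl fun i _ => ?_
  rw [Finset.mul_sum]
  refine Finset.sum_congr rfl fun j _ => ?_
  rw [pd_comm hu i j θ]

end CalcLemmas

theorem grad_transport_inner_grad_eq_zero_periodic
    (u : E2 → E2)
    (hu : ContDiff ℝ (⊤ : ℕ∞) u) (hu' : Periodic2 u)
    (hdiv : ∀ θ, div2 u θ = 0) :
    ∑ j, ∫ θ in Torus2, ⟪pd (transport u u) j θ, pd u j θ⟫ = 0 := by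
  have hT : ContDiff ℝ (⊤ : ℕ∞) (transport u u) := contDiff_transport hu
  set G : E2 → E2 := fun θ => ((1/2 : ℝ) * ∑ j, ⟪pd u j θ, pd u j θ⟫) • u θ with hG
  have hGsmooth : ContDiff ℝ (⊤ : ℕ∞) G := (contDiff_g hu).smul hu
  have hGper : Periodic2 G := by
    intro θ j
    show ((1/2 : ℝ) * ∑ k, ⟪pd u k (θ + (2*π) • EuclideanSpace.single j 1),
        pd u k (θ + (2*π) • EuclideanSpace.single j 1)⟫) •
        u (θ + (2*π) • EuclideanSpace.single j 1) = _
    rw [hu' θ j, Finset.sum_congr rfl fun k _ => by rw [periodic2_pd hu hu' k θ j]]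
  have hint : ∀ j : Fin 2, IntegrableOn
      (fun θ => ⟪pd (transport u u) j θ, pd u j θ⟫) Torus2 volume := fun j =>
    ((contDiff_pd hT j).continuous.inner (contDiff_pd hu j).continuous).continuousOn.integrableOn_compact
      isCompact_torus2
  rw [← integral_finset_sum _ (fun j _ => hint j)]
  rw [setIntegral_congr_fun isCompact_torus2.measurableSet
    (fun θ _ => pointwise_id hu hdiv θ)]
  exact integral_div2_torus_eq_zero G hGsmooth hGper
end
end
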